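/- arXiv:2204.07807 — 2 statements merged into one kernel-verified Lean document; each statement's English description precedes it below -/
import Mathlib

section
/- Let k be a field, M a finite-dimensional k-vector space with an endomorphism F, and suppose M = M₁ ⊕ ⋯ ⊕ M_s is a decomposition into F-stable subspaces such that the characteristic polynomials of F on the M_i are pairwise coprime. Let A be a complete Noetherian local ring with residue field k, and let (M̃, F̃) be a lift of (M, F) to a finite free A-module with an endomorphism reducing to F. Then there is a unique decomposition M̃ = M̃₁ ⊕ ⋯ ⊕ M̃_s into F̃-stable finite free A-submodules lifting the given decomposition, namely the generalized eigenspace decomposition determined by the Hensel-lifted factorization of the characteristic polynomial. -/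
/-!
Over the residue field `k`, the projections of `M` onto the `Mᵢ` are polynomials in `F`: each
`Mᵢ` is killed by its characteristic polynomial `χᵢ`, and the Chinese remainder theorem for the
pairwise coprime `χᵢ` gives `qᵢ ≡ 1 mod χᵢ`, `qᵢ ≡ 0 mod χⱼ`. Lifting the `qᵢ` to `A[X]` and
evaluating at `F̃` gives approximate idempotents in `End_A(M̃)`, an `𝔪`-adically complete algebra
since `M̃` is finite free. Newton's iteration `x ↦ 3x² - 2x³` turns them into a complete family of
orthogonal idempotents `Eᵢ` commuting with everything that commutes with `F̃`, and the `M̃ᵢ` are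
their images.

Uniqueness rests on rigidity: if two commuting idempotents `e, f` agree modulo `𝔪`, then
`e (1 - f)` is an idempotent in `𝔪 End_A(M̃)`, hence in every `𝔪ⁿ End_A(M̃)`, hence zero; so
`e = ef = f`. The projections of any other admissible decomposition commute with `F̃`, hence with
the `Eᵢ`, and reduce to the same projections modulo `𝔪`.
-/

open IsLocalRing Polynomial

namespace IsAdicComplete

variable {R : Type*} [CommRing R] {I : Ideal R}

theorem of_linearEquiv {M N : Type*} [AddCommGroup M] [Module R M] [AddCommGroup N] [Module R N]
    [IsAdicComplete I M] (e : M ≃ₗ[R] N) : IsAdicComplete I N := by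
  rw [← AdicCompletion.of_bijective_iff]
  have h : ⇑(AdicCompletion.of I N) =
      AdicCompletion.congr I e ∘ AdicCompletion.of I M ∘ e.symm := by
    ext x
    simp [AdicCompletion.congr, AdicCompletion.map_of]
  rw [h]
  exact (AdicCompletion.congr I e).bijective.comp
    ((AdicCompletion.of_bijective I M).comp e.symm.bijective)

instance pi {ι : Type*} [Fintype ι] [DecidableEq ι] {M : ι → Type*} [∀ i, AddCommGroup (M i)]
    [∀ i, Module R (M i)] [∀ i, IsAdicComplete I (M i)] : IsAdicComplete I (∀ i, M i) := by
  rw [← AdicCompletion.of_bijective_iff]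
  have hpi (x : ∀ i, M i) (i : ι) :
      AdicCompletion.pi I M (AdicCompletion.of I _ x) i = AdicCompletion.of I (M i) (x i) :=
    AdicCompletion.map_of _ _ _
  have h : ⇑(AdicCompletion.of I (∀ i, M i)) = (AdicCompletion.piEquivOfFintype I M).symm ∘
      Pi.map fun i => AdicCompletion.of I (M i) := by
    ext1 x
    rw [Function.comp_apply, LinearEquiv.eq_symm_apply, AdicCompletion.piEquivOfFintype_apply]
    exact funext (hpi x)
  rw [h]
  exact (AdicCompletion.piEquivOfFintype I M).symm.bijective.comp
    (.piMap fun i => AdicCompletion.of_bijective I (M i))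

theorem of_free {M : Type*} [AddCommGroup M] [Module R M] [Module.Free R M] [Module.Finite R M]
    [IsAdicComplete I R] : IsAdicComplete I M :=
  of_linearEquiv (Module.Free.chooseBasis R M).equivFun.symm

end IsAdicComplete

section AdicAlgebra

variable {A S : Type*} [CommRing A] [Ring S] [Algebra A S] {I : Ideal A}

theorem mul_mem_smul_top_left {J : Ideal A} {x : S} (hx : x ∈ J • (⊤ : Submodule A S)) (y : S) :
    x * y ∈ J • (⊤ : Submodule A S) :=
  Submodule.smul_top_le_comap_smul_top J (LinearMap.mulRight A y) hx

theorem mul_mem_smul_top_right {J : Ideal A} {y : S} (x : S) (hy : y ∈ J • (⊤ : Submodule A S)) :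
    x * y ∈ J • (⊤ : Submodule A S) :=
  Submodule.smul_top_le_comap_smul_top J (LinearMap.mulLeft A x) hy

theorem mul_mem_pow_smul_top {m n : ℕ} {x y : S} (hx : x ∈ I ^ m • (⊤ : Submodule A S))
    (hy : y ∈ I ^ n • (⊤ : Submodule A S)) : x * y ∈ I ^ (m + n) • (⊤ : Submodule A S) := by
  refine Submodule.smul_induction_on hx (fun r hr z _ => ?_) fun x₁ x₂ h₁ h₂ => ?_
  · rw [smul_mul_assoc, pow_add, mul_smul]
    exact Submodule.smul_mem_smul hr (mul_mem_smul_top_right z hy)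
  · rw [add_mul]
    exact add_mem h₁ h₂

theorem pow_mem_pow_smul_top {x : S} (hx : x ∈ I • (⊤ : Submodule A S)) (n : ℕ) :
    x ^ n ∈ I ^ n • (⊤ : Submodule A S) := by
  induction n with
  | zero => simp only [pow_zero, Ideal.one_eq_top, Submodule.top_smul, Submodule.mem_top]
  | succ n ih => rw [pow_succ x n]; exact mul_mem_pow_smul_top ih (by rwa [pow_one])

theorem IsIdempotentElem.eq_zero_of_mem_smul_top [IsHausdorff I S] {e : S}
    (he : IsIdempotentElem e) (h : e ∈ I • (⊤ : Submodule A S)) : e = 0 := by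
  refine IsHausdorff.haus ‹_› e fun n => ?_
  rw [SModEq.zero, ← he.pow_succ_eq n]
  exact Submodule.smul_mono_left (Ideal.pow_le_pow_right n.le_succ) (pow_mem_pow_smul_top h _)

theorem IsIdempotentElem.eq_mul_of_commute_of_sub_mem [IsHausdorff I S] {e f : S}
    (he : IsIdempotentElem e) (hf : IsIdempotentElem f) (hef : Commute e f)
    (h : e - f ∈ I • (⊤ : Submodule A S)) : e = e * f := by
  have hfactor : (e - f) * (1 - f) = e * (1 - f) := by
    simp only [sub_mul, mul_sub, mul_one, hf.eq]
    abel
  have hzero : e * (1 - f) = 0 :=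
    (he.mul_of_commute ((Commute.one_right e).sub_right hef) hf.one_sub).eq_zero_of_mem_smul_top
      (hfactor ▸ mul_mem_smul_top_left h _)
  rwa [mul_sub, mul_one, sub_eq_zero] at hzero

theorem IsIdempotentElem.eq_of_commute_of_sub_mem [IsHausdorff I S] {e f : S}
    (he : IsIdempotentElem e) (hf : IsIdempotentElem f) (hef : Commute e f)
    (h : e - f ∈ I • (⊤ : Submodule A S)) : e = f := by
  have hfe : f - e ∈ I • (⊤ : Submodule A S) := by rw [← neg_sub]; exact neg_mem h
  calc e = e * f := he.eq_mul_of_commute_of_sub_mem hf hef h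
    _ = f * e := hef.eq
    _ = f := (hf.eq_mul_of_commute_of_sub_mem he hef.symm hfe).symm

/-- Newton's step `x - (x² - x) / (2x - 1)` for `X² = X`, with `(2x - 1)⁻¹` replaced by `2x - 1`,
which squares to `1` modulo `x² - x`. -/
def idemNewton (x : S) : S := x * x * (3 - 2 * x)

theorem idemNewton_mul_self_sub (x : S) :
    idemNewton x * idemNewton x - idemNewton x =
      (x * x - x) * (x * x - x) * (4 * x * x - 4 * x - 3) := by
  unfold idemNewton; noncomm_ring

theorem idemNewton_sub (x : S) : idemNewton x - x = (x * x - x) * (1 - 2 * x) := by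
  unfold idemNewton; noncomm_ring

theorem Commute.idemNewton_left {x c : S} (h : Commute x c) : Commute (idemNewton x) c :=
  (h.mul_left h).mul_left ((Commute.ofNat_left 3 c).sub_left ((Commute.ofNat_left 2 c).mul_left h))

theorem idemNewton_iterate_mul_self_sub_mem {a : S} (ha : a * a - a ∈ I • (⊤ : Submodule A S))
    (n : ℕ) : idemNewton^[n] a * idemNewton^[n] a - idemNewton^[n] a ∈
      I ^ 2 ^ n • (⊤ : Submodule A S) := by
  induction n with
  | zero => simpa using ha
  | succ n ih =>
    rw [Function.iterate_succ_apply', idemNewton_mul_self_sub, pow_succ, mul_two]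
    exact mul_mem_smul_top_left (mul_mem_pow_smul_top ih ih) _

theorem exists_isIdempotentElem_sub_mem [IsAdicComplete I S] {a : S}
    (ha : a * a - a ∈ I • (⊤ : Submodule A S)) :
    ∃ e : S, IsIdempotentElem e ∧ e - a ∈ I • (⊤ : Submodule A S) ∧
      ∀ c, Commute a c → Commute e c := by
  set x : ℕ → S := fun n => idemNewton^[n] a
  have hmono {m n : ℕ} (h : m ≤ n) : I ^ n • (⊤ : Submodule A S) ≤ I ^ m • ⊤ :=
    Submodule.smul_mono_left (Ideal.pow_le_pow_right h)
  have hdefect (n : ℕ) : x n * x n - x n ∈ I ^ n • (⊤ : Submodule A S) :=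
    hmono Nat.lt_two_pow_self.le (idemNewton_iterate_mul_self_sub_mem ha n)
  have hstep (n : ℕ) : x (n + 1) - x n ∈ I ^ 2 ^ n • (⊤ : Submodule A S) := by
    simp only [x, Function.iterate_succ_apply', idemNewton_sub]
    exact mul_mem_smul_top_left (idemNewton_iterate_mul_self_sub_mem ha n) _
  obtain ⟨e, he⟩ := IsPrecomplete.prec inferInstance <|
    (AdicCompletion.isAdicCauchy_iff I S x).2 fun n => by
      rw [SModEq.sub_mem, ← neg_sub]; exact neg_mem (hmono Nat.lt_two_pow_self.le (hstep n))
  have hlim (n : ℕ) : e - x n ∈ I ^ n • (⊤ : Submodule A S) :=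
    SModEq.sub_mem.1 (he n).symm
  refine ⟨e, ?_, ?_, fun c hc => ?_⟩
  · refine (IsHausdorff.eq_iff_smodEq (I := I)).2 fun n => SModEq.sub_mem.2 ?_
    have : e * e - e = (e - x n) * e + x n * (e - x n) - (e - x n) + (x n * x n - x n) := by
      noncomm_ring
    rw [this]
    exact add_mem (sub_mem (add_mem (mul_mem_smul_top_left (hlim n) e)
      (mul_mem_smul_top_right _ (hlim n))) (hlim n)) (hdefect n)
  · have : e - a = (e - x 1) + (x 1 - x 0) := by simp [x]
    rw [this, ← pow_one I]
    exact add_mem (hlim 1) (hstep 0)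
  · have hxc (n : ℕ) : Commute (x n) c := by
      induction n with
      | zero => exact hc
      | succ n ih => simpa only [x, Function.iterate_succ_apply'] using ih.idemNewton_left
    refine (IsHausdorff.eq_iff_smodEq (I := I)).2 fun n => SModEq.sub_mem.2 ?_
    have : e * c - c * e = (e - x n) * c - c * (e - x n) := by
      rw [sub_mul, mul_sub, (hxc n).eq]; abel
    rw [this]
    exact sub_mem (mul_mem_smul_top_left (hlim n) c) (mul_mem_smul_top_right c (hlim n))

theorem exists_completeOrthogonalIdempotents_sub_mem [IsAdicComplete I S] {ι : Type*} [Fintype ι]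
    {a : ι → S} (hcomm : ∀ i j, Commute (a i) (a j))
    (hidem : ∀ i, a i * a i - a i ∈ I • (⊤ : Submodule A S))
    (hortho : Pairwise fun i j => a i * a j ∈ I • (⊤ : Submodule A S))
    (hcompl : ∑ i, a i - 1 ∈ I • (⊤ : Submodule A S)) :
    ∃ e : ι → S, CompleteOrthogonalIdempotents e ∧ (∀ i, e i - a i ∈ I • (⊤ : Submodule A S)) ∧
      ∀ i c, Commute (a i) c → Commute (e i) c := by
  choose e he hea hec using fun i => exists_isIdempotentElem_sub_mem (hidem i)
  have hee (i j : ι) : Commute (e i) (e j) := hec i _ (hec j _ (hcomm j i)).symm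
  have horth : OrthogonalIdempotents e := by
    refine ⟨he, fun i j hij =>
      ((he i).mul_of_commute (hee i j) (he j)).eq_zero_of_mem_smul_top (I := I) ?_⟩
    have : e i * e j = (e i - a i) * e j + a i * (e j - a j) + a i * a j := by noncomm_ring
    rw [this]
    exact add_mem (add_mem (mul_mem_smul_top_left (hea i) _) (mul_mem_smul_top_right _ (hea j)))
      (hortho hij)
  refine ⟨e, ⟨horth, horth.isIdempotentElem_sum.eq_of_commute_of_sub_mem (I := I)
    IsIdempotentElem.one (Commute.one_right _) ?_⟩, hea, hec⟩
  have : ∑ i, e i - 1 = ∑ i, (e i - a i) + (∑ i, a i - 1) := by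
    rw [Finset.sum_sub_distrib]; abel
  rw [this]
  exact add_mem (sum_mem fun i _ => hea i) hcompl

end AdicAlgebra

namespace DirectSum.IsInternal

variable {R M ι : Type*} [Ring R] [AddCommGroup M] [Module R M] [DecidableEq ι]
  {N : ι → Submodule R M}

theorem linearMap_ext (h : IsInternal N) {M' : Type*} [AddCommGroup M'] [Module R M']
    {f g : M →ₗ[R] M'} (hfg : ∀ i, ∀ x ∈ N i, f x = g x) : f = g :=
  LinearMap.ext fun x => Submodule.iSup_induction N (motive := fun x => f x = g x)
    (h.submodule_iSup_eq_top ▸ Submodule.mem_top) hfg (by simp) fun x y hx hy => by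
      simp [hx, hy]

noncomputable def linearProj (h : IsInternal N) (i : ι) : Module.End R M :=
  (N i).subtype ∘ₗ DirectSum.component R ι (fun j => N j) i ∘ₗ
    (LinearEquiv.ofBijective (DirectSum.coeLinearMap N) h).symm.toLinearMap

theorem linearProj_apply_of_mem (h : IsInternal N) (i : ι) {j : ι} {x : M} (hx : x ∈ N j) :
    h.linearProj i x = if i = j then x else 0 := by
  split_ifs with hij
  · subst hij
    simp [linearProj, ← DirectSum.apply_eq_component, h.ofBijective_coeLinearMap_of_mem hx]
  · simp [linearProj, ← DirectSum.apply_eq_component,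
      h.ofBijective_coeLinearMap_of_mem_ne (Ne.symm hij) hx]

theorem linearProj_mem (h : IsInternal N) (i : ι) (x : M) : h.linearProj i x ∈ N i :=
  Subtype.coe_prop _

theorem range_linearProj (h : IsInternal N) (i : ι) : LinearMap.range (h.linearProj i) = N i :=
  le_antisymm (LinearMap.range_le_iff_comap.2 (eq_top_iff.2 fun x _ => h.linearProj_mem i x))
    fun x hx => ⟨x, by simp [h.linearProj_apply_of_mem i hx]⟩

theorem completeOrthogonalIdempotents_linearProj [Fintype ι] (h : IsInternal N) :
    CompleteOrthogonalIdempotents h.linearProj := by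
  refine ⟨⟨fun i => LinearMap.ext fun x => ?_, fun i j hij => LinearMap.ext fun x => ?_⟩,
    h.linearMap_ext fun j x hx => ?_⟩
  · rw [Module.End.mul_apply, h.linearProj_apply_of_mem i (h.linearProj_mem i x), if_pos rfl]
  · rw [Module.End.mul_apply, h.linearProj_apply_of_mem i (h.linearProj_mem j x), if_neg hij,
      LinearMap.zero_apply]
  · simp [h.linearProj_apply_of_mem _ hx]

theorem commute_linearProj (h : IsInternal N) {f : Module.End R M}
    (hf : ∀ j, ∀ x ∈ N j, f x ∈ N j) (i : ι) : Commute f (h.linearProj i) :=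
  h.linearMap_ext fun j x hx => by
    simp only [Module.End.mul_apply, h.linearProj_apply_of_mem i hx,
      h.linearProj_apply_of_mem i (hf j x hx)]
    split_ifs <;> simp

end DirectSum.IsInternal

namespace CompleteOrthogonalIdempotents

variable {R M ι : Type*} [Ring R] [AddCommGroup M] [Module R M] [Fintype ι] [DecidableEq ι]
  {E : ι → Module.End R M}

theorem isInternal_range (hE : CompleteOrthogonalIdempotents E) :
    DirectSum.IsInternal fun i => LinearMap.range (E i) := by
  refine DirectSum.isInternal_submodule_of_iSupIndep_of_iSup_eq_top (fun i => ?_) ?_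
  · refine Submodule.disjoint_def.2 fun x hx hx' => ?_
    have hker : ⨆ (j) (_ : j ≠ i), LinearMap.range (E j) ≤ LinearMap.ker (E i) :=
      iSup₂_le fun j hj => LinearMap.range_le_ker_iff.2 (hE.ortho (Ne.symm hj))
    rw [← (LinearMap.IsIdempotentElem.mem_range_iff (hE.idem i)).1 hx]
    exact hker hx'
  · refine eq_top_iff.2 fun x _ => ?_
    rw [← Module.End.one_apply (R := R) x, ← hE.complete, LinearMap.sum_apply]
    exact sum_mem fun i _ => Submodule.mem_iSup_of_mem i (LinearMap.mem_range_self _ _)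

end CompleteOrthogonalIdempotents

theorem IsIdempotentElem.free_range {R M : Type*} [CommRing R] [IsLocalRing R] [AddCommGroup M]
    [Module R M] [Module.Projective R M] [Module.Finite R M] {e : Module.End R M}
    (he : IsIdempotentElem e) : Module.Free R (LinearMap.range e) :=
  have : Module.Projective R (LinearMap.range e) :=
    .of_split (LinearMap.range e).subtype e.rangeRestrict <| LinearMap.ext fun x =>
      Subtype.ext ((LinearMap.IsIdempotentElem.mem_range_iff he).1 x.2)
  Module.free_of_flat_of_isLocalRing

theorem DirectSum.IsInternal.apply_linearProj_of_mapsTo {A R M Mbar ι : Type*} [Ring A] [Ring R]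
    [AddCommGroup M] [Module A M] [AddCommGroup Mbar] [Module A Mbar] [Module R Mbar]
    [DecidableEq ι] {Nt : ι → Submodule A M} {N : ι → Submodule R Mbar} (hNt : IsInternal Nt)
    (hN : IsInternal N) {π : M →ₗ[A] Mbar} (hπ : ∀ j, ∀ x ∈ Nt j, π x ∈ N j) (i : ι) (x : M) :
    π (hNt.linearProj i x) = hN.linearProj i (π x) :=
  Submodule.iSup_induction Nt (motive := fun x => π (hNt.linearProj i x) = hN.linearProj i (π x))
    (hNt.submodule_iSup_eq_top ▸ Submodule.mem_top)
    (fun j x hx => by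
      rw [hNt.linearProj_apply_of_mem i hx, hN.linearProj_apply_of_mem i (hπ j x hx)]
      split_ifs <;> simp)
    (by simp) fun x y hx hy => by simp [hx, hy]

theorem map_aeval_apply {R S M N : Type*} [CommRing R] [CommRing S] [Algebra R S]
    [AddCommGroup M] [Module R M] [AddCommGroup N] [Module R N] [Module S N] [IsScalarTower R S N]
    (φ : M →ₗ[R] N) {f : Module.End R M} {g : Module.End S N} (h : ∀ x, φ (f x) = g (φ x))
    (p : R[X]) (x : M) : φ (aeval f p x) = aeval g (p.map (algebraMap R S)) (φ x) := by
  have hpow (n : ℕ) (x : M) : φ ((f ^ n) x) = (g ^ n) (φ x) := by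
    induction n generalizing x with
    | zero => rfl
    | succ n ih => rw [pow_succ, pow_succ, Module.End.mul_apply, Module.End.mul_apply, ih, h]
  induction p using Polynomial.induction_on' with
  | add p q hp hq => simp [hp, hq]
  | monomial n a => simp [Polynomial.aeval_monomial, hpow, algebraMap_smul]

theorem exists_dvd_sub_one_and_dvd {R ι : Type*} [CommRing R] [Fintype ι] [DecidableEq ι]
    {p : ι → R} (hp : Pairwise fun i j => IsCoprime (p i) (p j)) (i : ι) :
    ∃ q, p i ∣ q - 1 ∧ ∀ j ≠ i, p j ∣ q := by
  obtain ⟨u, v, huv⟩ : IsCoprime (p i) (∏ j ∈ Finset.univ.erase i, p j) :=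
    IsCoprime.prod_right fun j hj => hp (Finset.ne_of_mem_erase hj).symm
  exact ⟨v * ∏ j ∈ Finset.univ.erase i, p j, ⟨-u, by linear_combination huv⟩, fun j hj =>
    dvd_mul_of_dvd_right (Finset.dvd_prod_of_mem p (Finset.mem_erase.2 ⟨hj, Finset.mem_univ j⟩)) v⟩

section CayleyHamilton

variable {K V : Type*} [Field K] [AddCommGroup V] [Module K V] [FiniteDimensional K V]

theorem aeval_apply_eq_zero_of_charpoly_restrict_dvd {f : Module.End K V} {N : Submodule K V}
    (hf : ∀ x ∈ N, f x ∈ N) {p : K[X]} (hp : (f.restrict hf).charpoly ∣ p) {x : V} (hx : x ∈ N) :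
    aeval f p x = 0 := by
  have h := map_aeval_apply N.subtype (f := f.restrict hf) (g := f) (fun _ => rfl) p ⟨x, hx⟩
  rw [aeval_eq_zero_of_dvd_aeval_eq_zero hp (LinearMap.aeval_self_charpoly _)] at h
  simpa using h.symm

theorem exists_aeval_eq_linearProj {ι : Type*} [Fintype ι] [DecidableEq ι] {f : Module.End K V}
    {N : ι → Submodule K V} (hN : DirectSum.IsInternal N) (hf : ∀ i, ∀ x ∈ N i, f x ∈ N i)
    (hcop : Pairwise fun i j =>
      IsCoprime (f.restrict (hf i)).charpoly (f.restrict (hf j)).charpoly) :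
    ∃ q : ι → K[X], ∀ i, aeval f (q i) = hN.linearProj i := by
  choose q hq₁ hq₀ using exists_dvd_sub_one_and_dvd hcop
  refine ⟨q, fun i => hN.linearMap_ext fun j x hx => ?_⟩
  rw [hN.linearProj_apply_of_mem i hx]
  split_ifs with hij
  · subst hij
    have := aeval_apply_eq_zero_of_charpoly_restrict_dvd (hf i) (hq₁ i) hx
    rwa [map_sub, map_one, LinearMap.sub_apply, Module.End.one_apply, sub_eq_zero] at this
  · exact aeval_apply_eq_zero_of_charpoly_restrict_dvd (hf j) (hq₀ i j (Ne.symm hij)) hx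

end CayleyHamilton

theorem Commute.aeval_left {R S : Type*} [CommSemiring R] [Semiring S] [Algebra R S] {a c : S}
    (h : Commute a c) (p : R[X]) : Commute (aeval a p) c :=
  (Algebra.commute_of_mem_adjoin_singleton_of_commute (aeval_mem_adjoin_singleton R a) h.symm).symm

theorem Module.End.mem_smul_top_iff {A M : Type*} [CommRing A] [AddCommGroup M] [Module A M]
    [Module.Free A M] [Module.Finite A M] {J : Ideal A} {d : Module.End A M} :
    d ∈ J • (⊤ : Submodule A (Module.End A M)) ↔ ∀ x, d x ∈ J • (⊤ : Submodule A M) := by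
  classical
  refine ⟨fun hd x => Submodule.smul_top_le_comap_smul_top J (LinearMap.applyₗ x) hd,
    fun hd => ?_⟩
  let b := Module.Free.chooseBasis A M
  have hd_eq : d = ∑ i, (b.coord i).smulRight (d (b i)) :=
    b.ext fun j => by simp [Finsupp.single_apply]
  rw [hd_eq]
  exact sum_mem fun i _ =>
    Submodule.smul_top_le_comap_smul_top J (LinearMap.smulRightₗ (b.coord i)) (hd _)

section Reduction

variable {A M Mbar : Type*} [CommRing A] {I : Ideal A} [AddCommGroup M] [Module A M]
  [Module.Free A M] [Module.Finite A M] [AddCommGroup Mbar] [Module A Mbar] {π : M →ₗ[A] Mbar}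

theorem mem_smul_top_iff_of_ker_eq (hker : LinearMap.ker π = I • ⊤) {d : Module.End A M} :
    d ∈ I • (⊤ : Submodule A (Module.End A M)) ↔ ∀ x, π (d x) = 0 := by
  simp only [Module.End.mem_smul_top_iff, ← hker, LinearMap.mem_ker]

theorem IsIdempotentElem.eq_of_commute_of_reduction [IsAdicComplete I A]
    (hker : LinearMap.ker π = I • ⊤) {e f : Module.End A M} (he : IsIdempotentElem e)
    (hf : IsIdempotentElem f) (hef : Commute e f) (h : ∀ x, π (e x) = π (f x)) : e = f :=
  have := IsAdicComplete.of_free (I := I) (M := Module.End A M)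
  he.eq_of_commute_of_sub_mem (I := I) hf hef <|
    (mem_smul_top_iff_of_ker_eq hker).2 fun x => by simp [h]

theorem exists_completeOrthogonalIdempotents_lift [IsAdicComplete I A]
    (hker : LinearMap.ker π = I • ⊤) {ι R : Type*} [Fintype ι] [Semiring R] [Module R Mbar]
    {e : ι → Module.End R Mbar} (he : CompleteOrthogonalIdempotents e)
    {a : ι → Module.End A M} (hcomm : ∀ i j, Commute (a i) (a j))
    (hlift : ∀ i x, π (a i x) = e i (π x)) :
    ∃ E : ι → Module.End A M, CompleteOrthogonalIdempotents E ∧ (∀ i x, π (E i x) = e i (π x)) ∧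
      ∀ i c, Commute (a i) c → Commute (E i) c := by
  have := IsAdicComplete.of_free (I := I) (M := Module.End A M)
  obtain ⟨E, hE, hEa, hEc⟩ := exists_completeOrthogonalIdempotents_sub_mem (I := I) hcomm
    (fun i => (mem_smul_top_iff_of_ker_eq hker).2 fun x => by
      rw [LinearMap.sub_apply, Module.End.mul_apply, map_sub, hlift, hlift,
        ← Module.End.mul_apply, (he.idem i).eq, sub_self])
    (fun i j hij => (mem_smul_top_iff_of_ker_eq hker).2 fun x => by
      rw [Module.End.mul_apply, hlift, hlift, ← Module.End.mul_apply, he.ortho hij,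
        LinearMap.zero_apply])
    ((mem_smul_top_iff_of_ker_eq hker).2 fun x => by
      rw [LinearMap.sub_apply, map_sub, LinearMap.sum_apply, map_sum]
      simp only [hlift]
      rw [← LinearMap.sum_apply, he.complete, Module.End.one_apply, Module.End.one_apply,
        sub_self])
  refine ⟨E, hE, fun i x => ?_, hEc⟩
  have := (mem_smul_top_iff_of_ker_eq hker).1 (hEa i) x
  rwa [LinearMap.sub_apply, map_sub, sub_eq_zero, hlift] at this

end Reduction

theorem map_range_eq_of_apply_eq {A k M Mbar : Type*} [CommRing A] [CommRing k] [Algebra A k]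
    [AddCommGroup M] [Module A M] [AddCommGroup Mbar] [Module A Mbar] [Module k Mbar]
    [IsScalarTower A k Mbar] {π : M →ₗ[A] Mbar} (hπ : Function.Surjective π)
    {E : Module.End A M} {e : Module.End k Mbar} (h : ∀ x, π (E x) = e (π x)) :
    (LinearMap.range E).map π = (LinearMap.range e).restrictScalars A := by
  ext x
  constructor
  · rintro ⟨_, ⟨y, rfl⟩, rfl⟩
    exact ⟨π y, (h y).symm⟩
  · rintro ⟨y, rfl⟩
    obtain ⟨z, rfl⟩ := hπ y
    exact ⟨E z, ⟨z, rfl⟩, h z⟩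

theorem lift_decomposition_unique_general
    (A : Type*) [CommRing A] [IsLocalRing A]
    [IsAdicComplete (maximalIdeal A) A]
    (Mt : Type*) [AddCommGroup Mt] [Module A Mt]
    [Module.Free A Mt] [Module.Finite A Mt]
    (Ft : Mt →ₗ[A] Mt)
    (Mbar : Type*) [AddCommGroup Mbar] [Module (ResidueField A) Mbar]
    [Module A Mbar] [IsScalarTower A (ResidueField A) Mbar]
    [FiniteDimensional (ResidueField A) Mbar]
    (π : Mt →ₗ[A] Mbar) (hπ : Function.Surjective π)
    (hker : LinearMap.ker π = (maximalIdeal A) • (⊤ : Submodule A Mt))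
    (Fbar : Mbar →ₗ[ResidueField A] Mbar)
    (hcomm : ∀ x, Fbar (π x) = π (Ft x))
    (s : ℕ) (N : Fin s → Submodule (ResidueField A) Mbar)
    (hint : DirectSum.IsInternal N)
    (hstab : ∀ i, ∀ x ∈ N i, Fbar x ∈ N i)
    (hcop : ∀ i j, i ≠ j →
      IsCoprime (LinearMap.charpoly (Fbar.restrict (hstab i)))
        (LinearMap.charpoly (Fbar.restrict (hstab j)))) :
    ∃! Nt : Fin s → Submodule A Mt,
      DirectSum.IsInternal Nt ∧
      (∀ i, ∀ x ∈ Nt i, Ft x ∈ Nt i) ∧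
      (∀ i, Module.Free A (Nt i)) ∧
      (∀ i, Submodule.map π (Nt i) = (N i).restrictScalars A) := by
  obtain ⟨q, hq⟩ := exists_aeval_eq_linearProj hint hstab fun i j hij => hcop i j hij
  choose Q hQ using fun i =>
    Polynomial.map_surjective (algebraMap A (ResidueField A)) Ideal.Quotient.mk_surjective (q i)
  have hlift (i : Fin s) (x : Mt) : π (aeval Ft (Q i) x) = hint.linearProj i (π x) := by
    rw [map_aeval_apply π (fun x => (hcomm x).symm), hQ, hq]
  obtain ⟨E, hE, hEπ, hEcomm⟩ := exists_completeOrthogonalIdempotents_lift hker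
    hint.completeOrthogonalIdempotents_linearProj
    (fun i j => (Commute.all (Q i) (Q j)).map (aeval Ft)) hlift
  have hcommE {c : Module.End A Mt} (hc : Commute Ft c) (i : Fin s) : Commute (E i) c :=
    hEcomm i c (hc.aeval_left (Q i))
  refine ⟨fun i => LinearMap.range (E i), ⟨hE.isInternal_range, ?_, fun i => (hE.idem i).free_range,
    fun i => by rw [map_range_eq_of_apply_eq hπ (hEπ i), hint.range_linearProj]⟩, ?_⟩
  · rintro i _ ⟨y, rfl⟩
    exact ⟨Ft y, LinearMap.congr_fun (hcommE (Commute.refl Ft) i).eq y⟩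
  · rintro Nt ⟨hNt, hstabNt, -, hmapNt⟩
    funext i
    rw [← hNt.range_linearProj i]
    congr 1
    refine (hNt.completeOrthogonalIdempotents_linearProj.idem i).eq_of_commute_of_reduction hker
      (hE.idem i) (hcommE (hNt.commute_linearProj hstabNt i) i).symm fun x => ?_
    rw [hEπ, hNt.apply_linearProj_of_mapsTo hint fun j x hx => ?_]
    exact (Submodule.restrictScalars_mem A _ _).1 (hmapNt j ▸ Submodule.mem_map_of_mem hx)

/-- Lifting a decomposition into generalized eigenspaces along a complete
Noetherian local ring: if the residual characteristic polynomials on the pieces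
are pairwise coprime, a lift `(M̃, F̃)` of `(M, F)` admits a unique decomposition
into `F̃`-stable finite free submodules lifting the given one. -/
theorem lift_decomposition_unique
    (A : Type*) [CommRing A] [IsLocalRing A] [IsNoetherianRing A]
    [IsAdicComplete (maximalIdeal A) A]
    (Mt : Type*) [AddCommGroup Mt] [Module A Mt]
    [Module.Free A Mt] [Module.Finite A Mt]
    (Ft : Mt →ₗ[A] Mt)
    (Mbar : Type*) [AddCommGroup Mbar] [Module (ResidueField A) Mbar]
    [Module A Mbar] [IsScalarTower A (ResidueField A) Mbar]
    [FiniteDimensional (ResidueField A) Mbar]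
    (π : Mt →ₗ[A] Mbar) (hπ : Function.Surjective π)
    (hker : LinearMap.ker π = (maximalIdeal A) • (⊤ : Submodule A Mt))
    (Fbar : Mbar →ₗ[ResidueField A] Mbar)
    (hcomm : ∀ x, Fbar (π x) = π (Ft x))
    (s : ℕ) (N : Fin s → Submodule (ResidueField A) Mbar)
    (hint : DirectSum.IsInternal N)
    (hstab : ∀ i, ∀ x ∈ N i, Fbar x ∈ N i)
    (hcop : ∀ i j, i ≠ j →
      IsCoprime (LinearMap.charpoly (Fbar.restrict (hstab i)))
        (LinearMap.charpoly (Fbar.restrict (hstab j)))) :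
    ∃! Nt : Fin s → Submodule A Mt,
      DirectSum.IsInternal Nt ∧
      (∀ i, ∀ x ∈ Nt i, Ft x ∈ Nt i) ∧
      (∀ i, Module.Free A (Nt i)) ∧
      (∀ i, Submodule.map π (Nt i) = (N i).restrictScalars A) :=
  lift_decomposition_unique_general A Mt Ft Mbar π hπ hker Fbar hcomm s N hint hstab hcop
end

section
/- Let A be a complete Noetherian local ring with residue field k of characteristic l, and let ρ: T_q → GL(M) be a continuous representation of the q-tame group T_q = ⟨t, φ⟩ (with φ t φ⁻¹ = t^q) on a finite free A-module M, whose reduction mod m_A is unramified (i.e., kills t). Suppose M = M₀ ⊕ M₁ is a φ-stable decomposition with pairwise coprime residual characteristic polynomials, and suppose q is not an eigenvalue of the conjugation action of φ on Hom_k(M̄_i, M̄_j) for i ≠ j. Then the off-diagonal blocks ρ(t)_{i,j} ∈ Hom_A(M_i, M_j) for i ≠ j vanish, i.e., the decomposition is stable under all of T_q. -/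
/-!
Write `t = 1 + n` with `n ≡ 0 mod 𝔪`, and let `c : M₀ → M₁` be the off-diagonal block of `t`.
If `c ≡ 0 mod 𝔪 ^ K`, then `n² (M₀) ⊆ 𝔪 M₀ + 𝔪 ^ (K + 1) M`, so the block of
`t ^ q = 1 + q n + n² (…)` is `q c` modulo `𝔪 ^ (K + 1)`, and `φ t = t ^ q φ` gives
`φ c - q c φ ≡ 0 mod 𝔪 ^ (K + 1)`. The Sylvester operator `g ↦ φ g - q g φ` on `Hom_A(M₀, M₁)`
is bijective: its reduction mod `𝔪` is injective by assumption, hence surjective, and Nakayama lifts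
surjectivity to `A`, where a surjective endomorphism of a finite module is bijective. Hence
`c ≡ 0 mod 𝔪 ^ (K + 1)` for all `K`, and Krull's intersection theorem gives `c = 0`.
-/

open IsLocalRing Submodule

section IdealSmulTop

variable {R M N : Type*} [CommRing R] [AddCommGroup M] [Module R M] [AddCommGroup N] [Module R N]

theorem LinearMap.mem_smul_top_iff_forall_apply_mem [Module.Free R M] [Module.Finite R M]
    {I : Ideal R} {f : M →ₗ[R] N} :
    f ∈ I • (⊤ : Submodule R (M →ₗ[R] N)) ↔ ∀ x, f x ∈ I • (⊤ : Submodule R N) := by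
  refine ⟨fun hf x => smul_top_le_comap_smul_top I (LinearMap.applyₗ x) hf, fun hf => ?_⟩
  let b := Module.Free.chooseBasis R M
  have hsum : f = ∑ s, LinearMap.smulRightₗ (b.coord s) (f (b s)) :=
    b.ext fun s => by simp [Finsupp.single_apply]
  rw [hsum]
  exact sum_mem fun s _ => smul_top_le_comap_smul_top I _ (hf (b s))

theorem Submodule.mem_smul_top_of_isCompl {P Q : Submodule R M} (h : IsCompl P Q) {I : Ideal R}
    {x : P} (hx : (x : M) ∈ I • (⊤ : Submodule R M)) : x ∈ I • (⊤ : Submodule R P) := by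
  simpa using smul_top_le_comap_smul_top I (P.projectionOnto Q h) hx

theorem Submodule.projectionOnto_comp_eq_restrict_comp {P Q : Submodule R M} (h : IsCompl P Q)
    {φ : Module.End R M} (hφP : ∀ x ∈ P, φ x ∈ P) (hφQ : ∀ x ∈ Q, φ x ∈ Q) :
    P.projectionOnto Q h ∘ₗ φ = φ.restrict hφP ∘ₗ P.projectionOnto Q h := by
  ext z
  conv_lhs => rw [← projection_add_projection_eq_self h z, map_add]
  simp [projection_apply_of_mem_right, hφQ, projectionOnto_apply_of_mem_left, hφP]

theorem Module.End.one_add_pow_apply_sub_mem {n : Module.End R M} {V : Submodule R M}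
    (hV : ∀ v ∈ V, n v ∈ V) {x : M} (hx : n (n x) ∈ V) (r : ℕ) :
    ((1 + n) ^ r) x - x - r • n x ∈ V := by
  induction r with
  | zero => simp
  | succ r ih =>
    set e := ((1 + n) ^ r) x - x - r • n x
    have : ((1 + n) ^ (r + 1)) x - x - (r + 1) • n x = e + n e + r • n (n x) := by
      simp only [e, pow_succ', Module.End.mul_apply, LinearMap.add_apply, Module.End.one_apply,
        map_sub, map_nsmul, add_smul, one_smul]
      abel
    rw [this]
    exact add_mem (add_mem ih (hV e ih)) (nsmul_mem hx r)

theorem Submodule.map_smul_sup_pow_smul_top_le {I : Ideal R} {P : Submodule R M}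
    {n : Module.End R M} (hn : LinearMap.range n ≤ I • ⊤) {K : ℕ}
    (hP : P.map n ≤ I • P ⊔ I ^ K • ⊤) :
    (I • P ⊔ I ^ K • ⊤).map n ≤ I • P ⊔ I ^ (K + 1) • ⊤ := by
  rw [map_sup, map_smul'', map_smul'', map_top]
  refine sup_le ?_ ?_
  · calc I • P.map n ≤ I • (I • P ⊔ I ^ K • ⊤) := smul_mono_right _ hP
      _ = I • I • P ⊔ I ^ (K + 1) • ⊤ := by
        rw [smul_sup, ← Submodule.smul_assoc I (I ^ K), Ideal.smul_eq_mul, pow_succ']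
      _ ≤ I • P ⊔ I ^ (K + 1) • ⊤ := sup_le_sup_right smul_le_right _
  · calc I ^ K • LinearMap.range n ≤ I ^ K • I • ⊤ := smul_mono_right _ hn
      _ = I ^ (K + 1) • ⊤ := by rw [← Submodule.smul_assoc, Ideal.smul_eq_mul, pow_succ]
      _ ≤ I • P ⊔ I ^ (K + 1) • ⊤ := le_sup_right

end IdealSmulTop

section Sylvester

variable {R P Q : Type*} [CommRing R] [AddCommGroup P] [Module R P] [AddCommGroup Q] [Module R Q]

noncomputable def sylvesterMap (α : Module.End R P) (β : Module.End R Q) (c : R) :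
    Module.End R (P →ₗ[R] Q) :=
  LinearMap.compRight R β - c • LinearMap.lcomp R Q α

@[simp]
theorem sylvesterMap_apply (α : Module.End R P) (β : Module.End R Q) (c : R) (g : P →ₗ[R] Q) :
    sylvesterMap α β c g = β ∘ₗ g - c • (g ∘ₗ α) :=
  rfl

end Sylvester

section OffDiagonal

variable {R M : Type*} [CommRing R] [AddCommGroup M] [Module R M] {P Q : Submodule R M}

noncomputable def offDiagBlock (hPQ : IsCompl P Q) (f : Module.End R M) : P →ₗ[R] Q :=
  Q.projectionOnto P hPQ.symm ∘ₗ f ∘ₗ P.subtype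

theorem offDiagBlock_apply (hPQ : IsCompl P Q) (f : Module.End R M) (x : P) :
    offDiagBlock hPQ f x = Q.projectionOnto P hPQ.symm (f x) :=
  rfl

theorem mem_of_offDiagBlock_eq_zero {hPQ : IsCompl P Q} {f : Module.End R M}
    (hf : offDiagBlock hPQ f = 0) {x : M} (hx : x ∈ P) : f x ∈ P :=
  (projectionOnto_apply_eq_zero_iff hPQ.symm).mp (LinearMap.congr_fun hf ⟨x, hx⟩)

variable (hPQ : IsCompl P Q) {I : Ideal R} {t : Module.End R M}

theorem map_sub_one_le_of_offDiagBlock_mem (ht : LinearMap.range (t - 1) ≤ I • ⊤) {K : ℕ}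
    (hK : ∀ x, offDiagBlock hPQ t x ∈ I ^ K • (⊤ : Submodule R Q)) :
    P.map (t - 1) ≤ I • P ⊔ I ^ K • ⊤ := by
  rintro _ ⟨x, hx, rfl⟩
  rw [← projection_add_projection_eq_self hPQ ((t - 1) x)]
  refine add_mem_sup ?_ ?_
  · exact (mem_smul_top_iff I P _).mp
      (smul_top_le_comap_smul_top I (P.projectionOnto Q hPQ) (ht ⟨x, rfl⟩))
  · have hc : Q.projectionOnto P hPQ.symm ((t - 1) x) = offDiagBlock hPQ t ⟨x, hx⟩ := by
      simp [offDiagBlock_apply, projectionOnto_apply_of_mem_right hPQ.symm hx]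
    rw [projection_apply, hc]
    exact smul_top_le_comap_smul_top (I ^ K) Q.subtype (hK ⟨x, hx⟩)

theorem pow_apply_sub_sub_nsmul_mem_of_offDiagBlock_mem (ht : LinearMap.range (t - 1) ≤ I • ⊤)
    {K : ℕ} (hK : ∀ x, offDiagBlock hPQ t x ∈ I ^ K • (⊤ : Submodule R Q)) (r : ℕ) {y : M}
    (hy : y ∈ P) : (t ^ r) y - y - r • (t - 1) y ∈ I • P ⊔ I ^ (K + 1) • ⊤ := by
  have hW := map_sub_one_le_of_offDiagBlock_mem hPQ ht hK
  have hV := map_smul_sup_pow_smul_top_le ht hW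
  have hVW : I • P ⊔ I ^ (K + 1) • ⊤ ≤ I • P ⊔ I ^ K • ⊤ :=
    sup_le_sup_left (smul_mono_left (Ideal.pow_le_pow_right K.le_succ)) _
  simpa using Module.End.one_add_pow_apply_sub_mem (fun v hv => hV (mem_map_of_mem (hVW hv)))
    (hV (mem_map_of_mem (hW (mem_map_of_mem hy)))) r

variable {φ : Module.End R M} {q : ℕ}

theorem sylvesterMap_offDiagBlock_apply_mem (hrel : φ * t = t ^ q * φ)
    (ht : LinearMap.range (t - 1) ≤ I • ⊤) (hφP : ∀ x ∈ P, φ x ∈ P) (hφQ : ∀ x ∈ Q, φ x ∈ Q)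
    {K : ℕ} (hK : ∀ x, offDiagBlock hPQ t x ∈ I ^ K • (⊤ : Submodule R Q)) (x : P) :
    sylvesterMap (φ.restrict hφP) (φ.restrict hφQ) (q : R) (offDiagBlock hPQ t) x ∈
      I ^ (K + 1) • (⊤ : Submodule R Q) := by
  have hy : φ x ∈ P := hφP x x.2
  have hcomm : Q.projectionOnto P hPQ.symm (φ (t x)) =
      φ.restrict hφQ (Q.projectionOnto P hPQ.symm (t x)) :=
    LinearMap.congr_fun (projectionOnto_comp_eq_restrict_comp hPQ.symm hφQ hφP) (t x)
  have hrel_x : φ (t x) = (t ^ q) (φ x) := by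
    rw [← Module.End.mul_apply, hrel, Module.End.mul_apply]
  have heq : sylvesterMap (φ.restrict hφP) (φ.restrict hφQ) (q : R) (offDiagBlock hPQ t) x =
      Q.projectionOnto P hPQ.symm ((t ^ q) (φ x) - φ x - q • (t - 1) (φ x)) := by
    simp [offDiagBlock_apply, ← hcomm, hrel_x, projectionOnto_apply_of_mem_right hPQ.symm hy,
      Nat.cast_smul_eq_nsmul]
  have hproj : I • P ⊔ I ^ (K + 1) • ⊤ ≤
      (I ^ (K + 1) • ⊤ : Submodule R Q).comap (Q.projectionOnto P hPQ.symm) := by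
    refine sup_le (fun z hz => ?_) (smul_top_le_comap_smul_top _ _)
    simp [projectionOnto_apply_of_mem_right hPQ.symm (smul_le_right hz)]
  rw [heq]
  exact hproj (pow_apply_sub_sub_nsmul_mem_of_offDiagBlock_mem hPQ ht hK q hy)

theorem offDiagBlock_eq_zero [IsLocalRing R] [IsNoetherianRing R] [Module.Free R P]
    [Module.Finite R P] [Module.Finite R Q] (hrel : φ * t = t ^ q * φ)
    (ht : LinearMap.range (t - 1) ≤ maximalIdeal R • ⊤) (hφP : ∀ x ∈ P, φ x ∈ P)
    (hφQ : ∀ x ∈ Q, φ x ∈ Q)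
    (hL : Function.Bijective (sylvesterMap (φ.restrict hφP) (φ.restrict hφQ) (q : R))) :
    offDiagBlock hPQ t = 0 := by
  let L := LinearEquiv.ofBijective _ hL
  have hmem : ∀ K : ℕ,
      offDiagBlock hPQ t ∈ maximalIdeal R ^ K • (⊤ : Submodule R (P →ₗ[R] Q)) := by
    intro K
    induction K with
    | zero => simp
    | succ K ih =>
      have hLc : L (offDiagBlock hPQ t) ∈ maximalIdeal R ^ (K + 1) • ⊤ :=
        LinearMap.mem_smul_top_iff_forall_apply_mem.mpr <|
          sylvesterMap_offDiagBlock_apply_mem hPQ hrel ht hφP hφQ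
            (LinearMap.mem_smul_top_iff_forall_apply_mem.mp ih)
      simpa using smul_top_le_comap_smul_top _ L.symm.toLinearMap hLc
  have hkrull := (maximalIdeal R).iInf_pow_smul_eq_bot_of_isLocalRing (M := P →ₗ[R] Q)
    (maximalIdeal.isMaximal R).ne_top
  rw [← mem_bot R, ← hkrull]
  exact mem_iInf _ |>.mpr hmem

end OffDiagonal

section Residue

variable {A P Q V W : Type*} [CommRing A] [IsLocalRing A]
  [AddCommGroup P] [Module A P] [AddCommGroup Q] [Module A Q]
  [AddCommGroup V] [Module (ResidueField A) V] [Module A V] [IsScalarTower A (ResidueField A) V]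
  [AddCommGroup W] [Module (ResidueField A) W] [Module A W] [IsScalarTower A (ResidueField A) W]

theorem IsLocalRing.maximalIdeal_smul_top_le_ker (ν : Q →ₗ[A] W) :
    maximalIdeal A • (⊤ : Submodule A Q) ≤ LinearMap.ker ν :=
  smul_le.mpr fun a ha y _ => by
    rw [LinearMap.mem_ker, map_smul, ← algebraMap_smul (ResidueField A),
      ResidueField.algebraMap_eq, (residue_eq_zero_iff a).mpr ha, zero_smul]

variable [Module.Free A P] [Module.Finite A P]
  [FiniteDimensional (ResidueField A) V] [FiniteDimensional (ResidueField A) W]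
  {νP : P →ₗ[A] V} {νQ : Q →ₗ[A] W} {α : Module.End A P} {β : Module.End A Q}
  {α' : Module.End (ResidueField A) V} {β' : Module.End (ResidueField A) W} {c : A}

theorem exists_sub_sylvesterMap_mem_smul_top (hνP : Function.Surjective νP)
    (hkerP : LinearMap.ker νP ≤ maximalIdeal A • ⊤) (hνQ : Function.Surjective νQ)
    (hkerQ : LinearMap.ker νQ ≤ maximalIdeal A • ⊤)
    (hα : ∀ x, νP (α x) = α' (νP x)) (hβ : ∀ y, νQ (β y) = β' (νQ y))
    (hinj : Function.Injective (sylvesterMap α' β' (algebraMap A (ResidueField A) c)))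
    (h : P →ₗ[A] Q) :
    ∃ g, h - sylvesterMap α β c g ∈ maximalIdeal A • (⊤ : Submodule A (P →ₗ[A] Q)) := by
  have hle : LinearMap.ker νP ≤ LinearMap.ker (νQ ∘ₗ h) := fun x hx =>
    maximalIdeal_smul_top_le_ker νQ (smul_top_le_comap_smul_top _ h (hkerP hx))
  let hbar : V →ₗ[A] W :=
    (LinearMap.ker νP).liftQ (νQ ∘ₗ h) hle ∘ₗ (νP.quotKerEquivOfSurjective hνP).symm.toLinearMap
  have hhbar : ∀ x, hbar (νP x) = νQ (h x) := fun x => by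
    simp [hbar, LinearMap.quotKerEquivOfSurjective_symm_apply]
  have hres : Function.Surjective (algebraMap A (ResidueField A)) := Ideal.Quotient.mk_surjective
  obtain ⟨gbar, hgbar⟩ :=
    LinearMap.injective_iff_surjective.mp hinj (hbar.extendScalarsOfSurjective hres)
  obtain ⟨g, hg⟩ := Module.projective_lifting_property νQ (gbar.restrictScalars A ∘ₗ νP) hνQ
  refine ⟨g, LinearMap.mem_smul_top_iff_forall_apply_mem.mpr fun x => hkerQ ?_⟩
  have hgx : ∀ x, νQ (g x) = gbar (νP x) := LinearMap.congr_fun hg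
  have hgbarx : β' (gbar (νP x)) - c • gbar (α' (νP x)) = νQ (h x) := by
    rw [← hhbar, ← LinearMap.extendScalarsOfSurjective_apply hres hbar, ← hgbar]
    simp [-ResidueField.algebraMap_eq]
  rw [LinearMap.mem_ker, LinearMap.sub_apply, map_sub, ← hgbarx]
  simp [hβ, hgx, hα]

theorem sylvesterMap_bijective_of_residue [Module.Finite A Q] (hνP : Function.Surjective νP)
    (hkerP : LinearMap.ker νP ≤ maximalIdeal A • ⊤) (hνQ : Function.Surjective νQ)
    (hkerQ : LinearMap.ker νQ ≤ maximalIdeal A • ⊤)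
    (hα : ∀ x, νP (α x) = α' (νP x)) (hβ : ∀ y, νQ (β y) = β' (νQ y))
    (hinj : Function.Injective (sylvesterMap α' β' (algebraMap A (ResidueField A) c))) :
    Function.Bijective (sylvesterMap α β c) := by
  refine OrzechProperty.bijective_of_surjective_endomorphism _ (LinearMap.range_eq_top.mp ?_)
  refine top_le_iff.mp (le_of_le_smul_of_le_jacobson_bot Module.Finite.fg_top
    (maximalIdeal_le_jacobson ⊥) fun h _ => ?_)
  obtain ⟨g, hg⟩ := exists_sub_sylvesterMap_mem_smul_top hνP hkerP hνQ hkerQ hα hβ hinj h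
  rw [← add_sub_cancel (sylvesterMap α β c g) h]
  exact add_mem_sup (LinearMap.mem_range_self _ g) hg

end Residue

section Summand

variable {R M : Type*} [CommRing R] [AddCommGroup M] [Module R M] [Module.Finite R M]
  {P Q : Submodule R M}

theorem Submodule.finite_of_isCompl (h : IsCompl P Q) : Module.Finite R P :=
  .of_surjective _ (projectionOnto_surjective h)

theorem Submodule.free_of_isCompl [IsLocalRing R] [Module.Free R M] (h : IsCompl P Q) :
    Module.Free R P :=
  have := finite_of_isCompl h
  have : Module.Projective R P :=
    .of_split P.subtype (P.projectionOnto Q h) (LinearMap.ext (projectionOnto_apply_left h))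
  Module.free_of_flat_of_isLocalRing

end Summand

theorem exists_reduction_of_isCompl {R S M N : Type*} [CommRing R] [Ring S] [Algebra R S]
    [AddCommGroup M] [Module R M] [AddCommGroup N] [Module S N] [Module R N] [IsScalarTower R S N]
    {P Q : Submodule R M} (h : IsCompl P Q) {I : Ideal R} {π : M →ₗ[R] N}
    (hker : LinearMap.ker π = I • ⊤) {N' : Submodule S N}
    (hred : P.map π = N'.restrictScalars R) :
    ∃ ν : P →ₗ[R] N', Function.Surjective ν ∧ LinearMap.ker ν ≤ I • ⊤ ∧ ∀ x, (ν x : N) = π x := by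
  have hmem : ∀ x : P, π x ∈ N' := fun x => by
    simpa only [hred, restrictScalars_mem] using mem_map_of_mem (f := π) x.2
  let ν : P →ₗ[R] N' :=
    { toFun x := ⟨π x, hmem x⟩
      map_add' x y := by ext; simp
      map_smul' a x := by ext; simp }
  refine ⟨ν, fun w => ?_, fun x hx => mem_smul_top_of_isCompl h ?_, fun _ => rfl⟩
  · obtain ⟨x, hx, hxw⟩ : (w : N) ∈ P.map π := by rw [hred]; exact w.2
    exact ⟨⟨x, hx⟩, Subtype.ext hxw⟩
  · rw [← hker, LinearMap.mem_ker]
    exact congrArg Subtype.val (LinearMap.mem_ker.mp hx)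

theorem tame_decomposition_stable_general
    (A : Type*) [CommRing A] [IsLocalRing A] [IsNoetherianRing A]
    (Mt : Type*) [AddCommGroup Mt] [Module A Mt]
    [Module.Free A Mt] [Module.Finite A Mt]
    (q : ℕ)
    (ρt ρφ : Mt ≃ₗ[A] Mt)
    (hrel : ρφ * ρt * ρφ⁻¹ = ρt ^ q)
    (Mbar : Type*) [AddCommGroup Mbar] [Module (ResidueField A) Mbar]
    [Module A Mbar] [IsScalarTower A (ResidueField A) Mbar]
    [FiniteDimensional (ResidueField A) Mbar]
    (π : Mt →ₗ[A] Mbar)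
    (hker : LinearMap.ker π = (maximalIdeal A) • (⊤ : Submodule A Mt))
    -- the reduction of `ρ` is unramified: `t` acts trivially mod `m_A`
    (hunram : ∀ x, π (ρt x) = π x)
    (φbar : Mbar →ₗ[ResidueField A] Mbar)
    (hφcomm : ∀ x, φbar (π x) = π (ρφ x))
    -- the `φ`-stable decomposition `M = M₀ ⊕ M₁` and its reduction
    (Msub : Fin 2 → Submodule A Mt)
    (hint : DirectSum.IsInternal Msub)
    (hφstab : ∀ i, ∀ x ∈ Msub i, ρφ x ∈ Msub i)
    (N : Fin 2 → Submodule (ResidueField A) Mbar)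
    (hred : ∀ i, Submodule.map π (Msub i) = (N i).restrictScalars A)
    (hNstab : ∀ i, ∀ x ∈ N i, φbar x ∈ N i)
    -- `q` is not an eigenvalue of conjugation by `φ̄` on `Hom_k(M̄_i, M̄_j)`
    (heig : ∀ i j, i ≠ j → ∀ f : (N i) →ₗ[ResidueField A] (N j),
      (φbar.restrict (hNstab j)) ∘ₗ f =
        (q : ResidueField A) • (f ∘ₗ (φbar.restrict (hNstab i))) → f = 0) :
    ∀ i, ∀ x ∈ Msub i, ρt x ∈ Msub i := by
  have hrel' : (ρφ : Module.End A Mt) * ρt = (ρt : Module.End A Mt) ^ q * ρφ := by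
    have := congrArg LinearEquiv.automorphismGroup.toLinearMapMonoidHom
      (mul_inv_eq_iff_eq_mul.mp hrel)
    rwa [map_mul, map_mul, map_pow] at this
  have ht : LinearMap.range ((ρt : Module.End A Mt) - 1) ≤ maximalIdeal A • ⊤ := by
    rintro _ ⟨z, rfl⟩
    simp [← hker, hunram]
  have hpair : ∀ i j, i ≠ j → IsCompl (Msub i) (Msub j) → ∀ x ∈ Msub i, ρt x ∈ Msub i := by
    intro i j hij hPQ
    have := free_of_isCompl hPQ
    have := finite_of_isCompl hPQ
    have := finite_of_isCompl hPQ.symm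
    obtain ⟨νi, hνi, hkeri, hπi⟩ := exists_reduction_of_isCompl hPQ hker (hred i)
    obtain ⟨νj, hνj, hkerj, hπj⟩ := exists_reduction_of_isCompl hPQ.symm hker (hred j)
    have hL : Function.Bijective (sylvesterMap ((ρφ : Module.End A Mt).restrict (hφstab i))
        ((ρφ : Module.End A Mt).restrict (hφstab j)) (q : A)) := by
      refine sylvesterMap_bijective_of_residue hνi hkeri hνj hkerj
        (α' := φbar.restrict (hNstab i)) (β' := φbar.restrict (hNstab j))
        (fun x => Subtype.ext ?_) (fun y => Subtype.ext ?_) ?_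
      · simp [hπi, hφcomm]
      · simp [hπj, hφcomm]
      · rw [map_natCast, injective_iff_map_eq_zero]
        exact fun f hf => heig i j hij f (sub_eq_zero.mp hf)
    exact fun x => mem_of_offDiagBlock_eq_zero (offDiagBlock_eq_zero hPQ hrel' ht _ _ hL)
  have hcompl : IsCompl (Msub 0) (Msub 1) :=
    (DirectSum.isInternal_submodule_iff_isCompl Msub (by decide)
      (by ext i; fin_cases i <;> simp)).mp hint
  intro i
  fin_cases i
  exacts [hpair 0 1 (by decide) hcompl, hpair 1 0 (by decide) hcompl.symm]

/-- Stability of a lifted decomposition under the whole tame group: for a lift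
`ρ` of an unramified representation of the `q`-tame group `T_q = ⟨t, φ⟩`
(with `φ t φ⁻¹ = t^q`) on a finite free module over a complete Noetherian local
ring, if `M = M₀ ⊕ M₁` is `φ`-stable with pairwise coprime residual
characteristic polynomials and `q` is not an eigenvalue of conjugation by `φ̄`
on the off-diagonal residual Hom spaces, then `M₀` and `M₁` are stable under
`t`, i.e. under all of `T_q`. -/
theorem tame_decomposition_stable
    (A : Type*) [CommRing A] [IsLocalRing A] [IsNoetherianRing A]
    [IsAdicComplete (maximalIdeal A) A]
    (Mt : Type*) [AddCommGroup Mt] [Module A Mt]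
    [Module.Free A Mt] [Module.Finite A Mt]
    (q : ℕ)
    (ρt ρφ : Mt ≃ₗ[A] Mt)
    (hrel : ρφ * ρt * ρφ⁻¹ = ρt ^ q)
    (Mbar : Type*) [AddCommGroup Mbar] [Module (ResidueField A) Mbar]
    [Module A Mbar] [IsScalarTower A (ResidueField A) Mbar]
    [FiniteDimensional (ResidueField A) Mbar]
    (π : Mt →ₗ[A] Mbar) (hπ : Function.Surjective π)
    (hker : LinearMap.ker π = (maximalIdeal A) • (⊤ : Submodule A Mt))
    -- the reduction of `ρ` is unramified: `t` acts trivially mod `m_A`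
    (hunram : ∀ x, π (ρt x) = π x)
    (φbar : Mbar →ₗ[ResidueField A] Mbar) (hφbij : Function.Bijective φbar)
    (hφcomm : ∀ x, φbar (π x) = π (ρφ x))
    -- the `φ`-stable decomposition `M = M₀ ⊕ M₁` and its reduction
    (Msub : Fin 2 → Submodule A Mt)
    (hint : DirectSum.IsInternal Msub)
    (hφstab : ∀ i, ∀ x ∈ Msub i, ρφ x ∈ Msub i)
    (N : Fin 2 → Submodule (ResidueField A) Mbar)
    (hred : ∀ i, Submodule.map π (Msub i) = (N i).restrictScalars A)
    (hNstab : ∀ i, ∀ x ∈ N i, φbar x ∈ N i)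
    -- the residual characteristic polynomials are pairwise coprime
    (hcop : ∀ i j, i ≠ j →
      IsCoprime (LinearMap.charpoly (φbar.restrict (hNstab i)))
        (LinearMap.charpoly (φbar.restrict (hNstab j))))
    -- `q` is not an eigenvalue of conjugation by `φ̄` on `Hom_k(M̄_i, M̄_j)`
    (heig : ∀ i j, i ≠ j → ∀ f : (N i) →ₗ[ResidueField A] (N j),
      (φbar.restrict (hNstab j)) ∘ₗ f =
        (q : ResidueField A) • (f ∘ₗ (φbar.restrict (hNstab i))) → f = 0) :
    ∀ i, ∀ x ∈ Msub i, ρt x ∈ Msub i :=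
  tame_decomposition_stable_general A Mt q ρt ρφ hrel Mbar π hker hunram φbar hφcomm Msub hint
    hφstab N hred hNstab heig
end
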